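/- arXiv:1105.4805 — 3 statements merged into one kernel-verified Lean document; each statement's English description precedes it below -/
import Mathlib

section
/- Let d ≥ 1 and let P be a homogeneous polynomial of degree m ≥ 1 in d variables with complex coefficients. Let ξ ∈ ℝ^d satisfy P(ξ) = 0 and ∇P(ξ) ≠ 0. Then the linear form x ↦ ⟨∇P(ξ), x⟩ = Σ_{j=1}^d ∂_j P(ξ) x_j is a localization of P at infinity; more precisely, there exist a constant c > 0 and a strictly increasing sequence (n_k) of positive integers such that sup_{|x| ≤ 1} | P(x + n_k ξ)/P̃(n_k ξ, 1) − c ⟨∇P(ξ), x⟩ / |∇P(ξ)| | → 0 as k → ∞. -/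
open MvPolynomial Filter Finset

noncomputable section

/-- Evaluation of a complex-coefficient polynomial at a real point. -/
def evalR {d : ℕ} (P : MvPolynomial (Fin d) ℂ) (ξ : EuclideanSpace ℝ (Fin d)) : ℂ :=
  eval (fun i => (ξ i : ℂ)) P

/-- `P̃_V(ξ,t) = sup {|P(ξ+η)| : η ∈ V, |η| ≤ t}`. -/
def PtildeV {d : ℕ} (P : MvPolynomial (Fin d) ℂ) (V : Submodule ℝ (EuclideanSpace ℝ (Fin d)))
    (ξ : EuclideanSpace ℝ (Fin d)) (t : ℝ) : ℝ :=
  sSup {r : ℝ | ∃ η ∈ V, ‖η‖ ≤ t ∧ r = ‖evalR P (ξ + η)‖}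

/-- `P̃(ξ,t) = P̃_{ℝ^d}(ξ,t)`. -/
def Ptilde {d : ℕ} (P : MvPolynomial (Fin d) ℂ) (ξ : EuclideanSpace ℝ (Fin d)) (t : ℝ) : ℝ :=
  PtildeV P ⊤ ξ t

/-- `σ⁰_P(V)`. -/
def sigma0 {d : ℕ} (P : MvPolynomial (Fin d) ℂ) (V : Submodule ℝ (EuclideanSpace ℝ (Fin d))) : ℝ :=
  sInf {r : ℝ | ∃ t > (1:ℝ), ∃ ξ, r = PtildeV P V ξ t / Ptilde P ξ t}

/-- `σ_P(V)`. -/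
def sigma {d : ℕ} (P : MvPolynomial (Fin d) ℂ) (V : Submodule ℝ (EuclideanSpace ℝ (Fin d))) : ℝ :=
  sInf {r : ℝ | ∃ t > (1:ℝ), r = liminf (fun ξ => PtildeV P V ξ t / Ptilde P ξ t)
    (Bornology.cobounded (EuclideanSpace ℝ (Fin d)))}

/-- Multi-index partial derivative `∂^α P`. -/
def pd {d : ℕ} (α : Fin d → ℕ) (P : MvPolynomial (Fin d) ℂ) : MvPolynomial (Fin d) ℂ :=
  ((List.ofFn fun i : Fin d =>
      ((pderiv i).toLinearMap ^ α i : Module.End ℂ (MvPolynomial (Fin d) ℂ))).prod) P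

/-- The finset of multi-indices `α` with `k ≤ |α| ≤ m`. -/
def midx (d m k : ℕ) : Finset (Fin d → ℕ) :=
  (Fintype.piFinset fun _ : Fin d => Finset.range (m+1)).filter fun α => k ≤ ∑ i, α i ∧ ∑ i, α i ≤ m

/-- `⟨∇P(ξ), x⟩ = Σ_j ∂_j P(ξ) x_j`. -/
def gradPair {d : ℕ} (P : MvPolynomial (Fin d) ℂ) (ξ x : EuclideanSpace ℝ (Fin d)) : ℂ :=
  ∑ j, evalR (pderiv j P) ξ * (x j : ℂ)

/-- `|∇P(ξ)|`, the Euclidean norm of the gradient. -/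
def gradNorm {d : ℕ} (P : MvPolynomial (Fin d) ℂ) (ξ : EuclideanSpace ℝ (Fin d)) : ℝ :=
  Real.sqrt (∑ j, ‖evalR (pderiv j P) ξ‖ ^ 2)

/-! Homogeneity turns `n ^ (1 - m) P(x + nξ)` into the difference quotient `n (P(ξ + x/n) - P(ξ))`,
which converges to `⟨∇P(ξ), x⟩` uniformly on the unit ball because `P` is differentiable at `ξ`.
Dividing by the supremum over the unit ball, which is how `P̃(nξ, 1)` normalizes `P(· + nξ)`,
commutes with uniform limits whose supremum is positive; so the normalized translates converge to
`⟨∇P(ξ), x⟩ / sup_{|y| ≤ 1} |⟨∇P(ξ), y⟩|`, which is the claim with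
`c = |∇P(ξ)| / sup_{|y| ≤ 1} |⟨∇P(ξ), y⟩|`. -/

section SupNorm

variable {X V : Type*} [SeminormedAddCommGroup V]

def supNormOn (K : Set X) (F : X → V) : ℝ :=
  sSup ((fun x => ‖F x‖) '' K)

lemma supNormOn_smul [NormedSpace ℝ V] (K : Set X) (F : X → V) (a : ℝ) :
    supNormOn K (fun x => a • F x) = |a| * supNormOn K F := by
  simp only [supNormOn, norm_smul, Real.norm_eq_abs]
  rw [← smul_eq_mul, ← Real.sSup_smul_of_nonneg (abs_nonneg a), ← Set.image_smul,
    Set.image_image]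
  rfl

lemma inv_supNormOn_smul_smul [NormedSpace ℝ V] (K : Set X) (F : X → V) {a : ℝ} (ha : 0 < a)
    (x : X) :
    (supNormOn K (fun y => a • F y))⁻¹ • (a • F x) = (supNormOn K F)⁻¹ • F x := by
  rw [supNormOn_smul, abs_of_pos ha, smul_smul, mul_inv_rev, mul_assoc, inv_mul_cancel₀ ha.ne',
    mul_one]

lemma sSup_setOf_norm_le_one_eq_supNormOn {E : Type*} [SeminormedAddCommGroup E] (F : E → V) :
    sSup {r | ∃ x : E, ‖x‖ ≤ 1 ∧ r = ‖F x‖} = supNormOn (Metric.closedBall 0 1) F := by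
  simp [supNormOn, Set.image, eq_comm]

variable {K : Set X} {F G : X → V}

lemma le_supNormOn (hF : BddAbove ((fun x => ‖F x‖) '' K)) {x : X} (hx : x ∈ K) :
    ‖F x‖ ≤ supNormOn K F :=
  le_csSup hF (Set.mem_image_of_mem _ hx)

lemma supNormOn_le (hK : K.Nonempty) {c : ℝ} (hc : ∀ x ∈ K, ‖F x‖ ≤ c) : supNormOn K F ≤ c :=
  csSup_le (hK.image _) (Set.forall_mem_image.2 hc)

lemma abs_supNormOn_sub_le (hK : K.Nonempty) (hG : BddAbove ((fun x => ‖G x‖) '' K)) {ε : ℝ}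
    (hε : ∀ x ∈ K, ‖F x - G x‖ ≤ ε) : |supNormOn K F - supNormOn K G| ≤ ε := by
  have hF_le : ∀ x ∈ K, ‖F x‖ ≤ supNormOn K G + ε := fun x hx =>
    (norm_le_norm_add_norm_sub' (F x) (G x)).trans (add_le_add (le_supNormOn hG hx) (hε x hx))
  have hF : BddAbove ((fun x => ‖F x‖) '' K) := ⟨_, Set.forall_mem_image.2 hF_le⟩
  have hG_le : ∀ x ∈ K, ‖G x‖ ≤ supNormOn K F + ε := fun x hx => by
    refine (norm_le_norm_add_norm_sub' (G x) (F x)).trans (add_le_add (le_supNormOn hF hx) ?_)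
    rw [norm_sub_rev]
    exact hε x hx
  rw [abs_sub_le_iff]
  constructor <;> linarith [supNormOn_le hK hF_le, supNormOn_le hK hG_le]

lemma norm_inv_supNormOn_smul_sub_le [NormedSpace ℝ V] (hK : K.Nonempty)
    (hG : BddAbove ((fun x => ‖G x‖) '' K)) {ε : ℝ} (hε : ∀ x ∈ K, ‖F x - G x‖ ≤ ε)
    (hεG : 2 * ε ≤ supNormOn K G) (hG0 : 0 < supNormOn K G) {x : X} (hx : x ∈ K) :
    ‖(supNormOn K F)⁻¹ • F x - (supNormOn K G)⁻¹ • G x‖ ≤ 4 * ε / supNormOn K G := by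
  set S := supNormOn K G
  set T := supNormOn K F
  have hTS := abs_supNormOn_sub_le hK hG hε
  have hε0 : 0 ≤ ε := (norm_nonneg _).trans (hε x hx)
  have hT : S / 2 ≤ T := by linarith [(abs_le.1 hTS).1]
  have hT0 : 0 < T := by linarith
  have hGx : ‖G x‖ ≤ S := le_supNormOn hG hx
  have hsplit : T⁻¹ • F x - S⁻¹ • G x = T⁻¹ • (F x - G x) + ((S - T) / (T * S)) • G x := by
    rw [smul_sub, sub_div, div_mul_cancel_right₀ hG0.ne', div_mul_cancel_left₀ hT0.ne']
    module
  calc ‖T⁻¹ • F x - S⁻¹ • G x‖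
      ≤ T⁻¹ * ε + |S - T| / (T * S) * S := by
        rw [hsplit]
        refine (norm_add_le _ _).trans (add_le_add ?_ ?_) <;>
          rw [norm_smul, Real.norm_eq_abs]
        · rw [abs_of_pos (inv_pos.2 hT0)]
          exact mul_le_mul_of_nonneg_left (hε x hx) (inv_pos.2 hT0).le
        · rw [abs_div, abs_of_pos (mul_pos hT0 hG0)]
          exact mul_le_mul_of_nonneg_left hGx (by positivity)
    _ ≤ 2 * ε / T := by
        rw [div_mul_eq_mul_div, mul_div_mul_right _ _ hG0.ne', inv_mul_eq_div, ← add_div,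
          div_le_div_iff_of_pos_right hT0]
        linarith [abs_sub_comm S T]
    _ ≤ 4 * ε / S := by
        rw [div_le_div_iff₀ hT0 hG0]
        nlinarith

lemma TendstoUniformlyOn.inv_supNormOn_smul [NormedSpace ℝ V] {ι : Type*} {l : Filter ι}
    {F : ι → X → V} (h : TendstoUniformlyOn F G l K) (hK : K.Nonempty)
    (hG : BddAbove ((fun x => ‖G x‖) '' K)) (hG0 : 0 < supNormOn K G) :
    TendstoUniformlyOn (fun n x => (supNormOn K (F n))⁻¹ • F n x)
      (fun x => (supNormOn K G)⁻¹ • G x) l K := by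
  set S := supNormOn K G
  rw [Metric.tendstoUniformlyOn_iff] at h ⊢
  intro ε hε
  have hδ : 0 < min (S / 2) (ε * S / 8) := by positivity
  filter_upwards [h _ hδ] with n hn x hx
  have hFG : ∀ y ∈ K, ‖F n y - G y‖ ≤ min (S / 2) (ε * S / 8) := fun y hy => by
    rw [← dist_eq_norm, dist_comm]
    exact (hn y hy).le
  rw [dist_comm, dist_eq_norm]
  calc _ ≤ 4 * min (S / 2) (ε * S / 8) / S :=
        norm_inv_supNormOn_smul_sub_le hK hG hFG (by linarith [min_le_left (S / 2) (ε * S / 8)])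
          hG0 hx
    _ ≤ 4 * (ε * S / 8) / S := by gcongr; exact min_le_right _ _
    _ < ε := by
        rw [div_lt_iff₀ hG0]
        linarith [mul_pos hε hG0]

lemma TendstoUniformlyOn.tendsto_supNormOn_sub {ι : Type*} {l : Filter ι} {F : ι → X → V}
    (h : TendstoUniformlyOn F G l K) (hK : K.Nonempty) :
    Tendsto (fun n => supNormOn K (fun x => F n x - G x)) l (nhds 0) := by
  rw [Metric.tendstoUniformlyOn_iff] at h
  rw [Metric.tendsto_nhds]
  intro ε hε
  filter_upwards [h (ε / 2) (half_pos hε)] with n hn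
  have hle : ∀ x ∈ K, ‖F n x - G x‖ ≤ ε / 2 := fun x hx => by
    rw [← dist_eq_norm, dist_comm]
    exact (hn x hx).le
  obtain ⟨x, hx⟩ := hK
  have h0 : 0 ≤ supNormOn K (fun x => F n x - G x) :=
    (norm_nonneg _).trans (le_supNormOn ⟨_, Set.forall_mem_image.2 hle⟩ hx)
  rw [Real.dist_0_eq_abs, abs_of_nonneg h0]
  linarith [supNormOn_le ⟨x, hx⟩ hle]

end SupNorm

lemma ContinuousLinearMap.bddAbove_norm_image_closedBall {E F : Type*} [SeminormedAddCommGroup E]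
    [NormedSpace ℝ E] [SeminormedAddCommGroup F] [NormedSpace ℝ F] (f : E →L[ℝ] F) :
    BddAbove ((fun x => ‖f x‖) '' Metric.closedBall 0 1) :=
  ⟨‖f‖ * 1, Set.forall_mem_image.2 fun _ hx => f.le_opNorm_of_le (mem_closedBall_zero_iff.1 hx)⟩

lemma HasFDerivAt.tendstoUniformlyOn_natCast_smul_sub {E F : Type*} [NormedAddCommGroup E]
    [NormedSpace ℝ E] [NormedAddCommGroup F] [NormedSpace ℝ F] {f : E → F} {f' : E →L[ℝ] F}
    {a : E} (hf : HasFDerivAt f f' a) {s : Set E} (hs : Bornology.IsBounded s) :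
    TendstoUniformlyOn (fun (n : ℕ) x => (n : ℝ) • (f (a + (n : ℝ)⁻¹ • x) - f a)) f' atTop s := by
  obtain ⟨R, hR, hsR⟩ := hs.subset_closedBall_lt 0 0
  rw [Metric.tendstoUniformlyOn_iff]
  intro ε hε
  obtain ⟨δ, hδ, hsmall⟩ := Metric.eventually_nhds_iff.1
    ((hasFDerivAt_iff_isLittleO_nhds_zero.1 hf).def (div_pos hε (mul_pos two_pos hR)))
  have hn_large : ∀ᶠ n : ℕ in atTop, (n : ℝ)⁻¹ < δ / R :=
    (tendsto_inv_atTop_nhds_zero_nat (𝕜 := ℝ)).eventually (gt_mem_nhds (div_pos hδ hR))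
  filter_upwards [hn_large, eventually_ne_atTop 0] with n hn hn0 x hx
  have hxR : ‖x‖ ≤ R := mem_closedBall_zero_iff.1 (hsR hx)
  have hn0' : (n : ℝ) ≠ 0 := Nat.cast_ne_zero.2 hn0
  have hh : ‖(n : ℝ)⁻¹ • x‖ < δ := by
    rw [norm_smul, Real.norm_eq_abs, abs_of_nonneg (by positivity)]
    calc (n : ℝ)⁻¹ * ‖x‖ ≤ (n : ℝ)⁻¹ * R := by gcongr
      _ < δ / R * R := by gcongr
      _ = δ := div_mul_cancel₀ δ hR.ne'
  have hrem := hsmall (by rwa [dist_zero_right])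
  have hx' : f' x = (n : ℝ) • f' ((n : ℝ)⁻¹ • x) := by rw [map_smul, smul_inv_smul₀ hn0']
  rw [dist_eq_norm, hx', ← smul_sub, norm_smul, Real.norm_eq_abs, abs_of_nonneg (by positivity),
    norm_sub_rev]
  calc (n : ℝ) * ‖f (a + (n : ℝ)⁻¹ • x) - f a - f' ((n : ℝ)⁻¹ • x)‖
      ≤ (n : ℝ) * (ε / (2 * R) * ‖(n : ℝ)⁻¹ • x‖) := by gcongr
    _ = ε / (2 * R) * ‖x‖ := by
        rw [norm_smul, Real.norm_eq_abs, abs_of_nonneg (by positivity)]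
        field_simp
    _ < ε := by
        rw [div_mul_eq_mul_div, div_lt_iff₀ (by positivity)]
        nlinarith

lemma MvPolynomial.IsHomogeneous.eval_const_mul {σ R : Type*} [CommSemiring R]
    {P : MvPolynomial σ R} {m : ℕ} (hP : P.IsHomogeneous m) (c : R) (y : σ → R) :
    eval (fun i => c * y i) P = c ^ m * eval y P := by
  rw [eval_eq, eval_eq, Finset.mul_sum]
  refine Finset.sum_congr rfl fun s hs => ?_
  have hdeg : ∑ i ∈ s.support, s i = m := by
    simpa [Finsupp.weight_apply, Finsupp.sum] using hP (mem_support_iff.mp hs)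
  simp_rw [mul_pow, Finset.prod_mul_distrib, Finset.prod_pow_eq_pow_sum, hdeg]
  ring

section Localization

variable {d : ℕ}

def gradCLM (P : MvPolynomial (Fin d) ℂ) (ξ : EuclideanSpace ℝ (Fin d)) :
    EuclideanSpace ℝ (Fin d) →L[ℝ] ℂ :=
  ∑ j, evalR (pderiv j P) ξ • (Complex.ofRealCLM.comp (EuclideanSpace.proj j))

@[simp]
lemma gradCLM_apply (P : MvPolynomial (Fin d) ℂ) (ξ x : EuclideanSpace ℝ (Fin d)) :
    gradCLM P ξ x = gradPair P ξ x := by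
  simp [gradCLM, gradPair]

lemma hasFDerivAt_evalR (P : MvPolynomial (Fin d) ℂ) (ξ : EuclideanSpace ℝ (Fin d)) :
    HasFDerivAt (evalR P) (gradCLM P ξ) ξ := by
  induction P using MvPolynomial.induction_on with
  | C c =>
    have hfun : evalR (C c : MvPolynomial (Fin d) ℂ) = fun _ => c := funext fun _ => eval_C c
    rw [hfun]
    refine (hasFDerivAt_const (𝕜 := ℝ) c ξ).congr_fderiv (ContinuousLinearMap.ext fun x => ?_)
    simp [gradPair, evalR]
  | add p q hp hq =>
    have hfun : evalR (p + q) = fun y => evalR p y + evalR q y := funext fun _ => map_add _ _ _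
    rw [hfun]
    refine (hp.add hq).congr_fderiv (ContinuousLinearMap.ext fun x => ?_)
    simp [gradPair, evalR, add_mul, Finset.sum_add_distrib]
  | mul_X p i hp =>
    have hfun : evalR (p * X i) = fun y => evalR p y * (y i : ℂ) := funext fun _ => by
      simp [evalR]
    have hcoord := (Complex.ofRealCLM.comp (EuclideanSpace.proj (𝕜 := ℝ) i)).hasFDerivAt (x := ξ)
    rw [hfun]
    refine (hp.mul hcoord).congr_fderiv (ContinuousLinearMap.ext fun x => ?_)
    simp [gradPair, evalR, Pi.single_apply, apply_ite (eval _), ite_mul, add_mul,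
      Finset.sum_add_distrib, Finset.mul_sum, mul_assoc]

lemma evalR_smul_of_isHomogeneous {P : MvPolynomial (Fin d) ℂ} {m : ℕ} (hP : P.IsHomogeneous m)
    (t : ℝ) (y : EuclideanSpace ℝ (Fin d)) : evalR P (t • y) = (t : ℂ) ^ m * evalR P y := by
  simpa [evalR] using hP.eval_const_mul (t : ℂ) (fun i => (y i : ℂ))

lemma Ptilde_one_eq_supNormOn (P : MvPolynomial (Fin d) ℂ) (a : EuclideanSpace ℝ (Fin d)) :
    Ptilde P a 1 = supNormOn (Metric.closedBall 0 1) (fun x => evalR P (x + a)) := by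
  rw [← sSup_setOf_norm_le_one_eq_supNormOn]
  simp [Ptilde, PtildeV, add_comm]

lemma tendstoUniformlyOn_rescale {P : MvPolynomial (Fin d) ℂ} {m : ℕ} (hm : 1 ≤ m)
    (hP : P.IsHomogeneous m) {ξ : EuclideanSpace ℝ (Fin d)} (hξ0 : evalR P ξ = 0) :
    TendstoUniformlyOn (fun (n : ℕ) x => ((n : ℝ) ^ (m - 1))⁻¹ • evalR P (x + (n : ℝ) • ξ))
      (gradCLM P ξ) atTop (Metric.closedBall 0 1) := by
  refine ((hasFDerivAt_evalR P ξ).tendstoUniformlyOn_natCast_smul_sub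
    Metric.isBounded_closedBall).congr ?_
  filter_upwards [eventually_ne_atTop 0] with n hn x _
  have hn' : (n : ℝ) ≠ 0 := Nat.cast_ne_zero.2 hn
  have hx : x + (n : ℝ) • ξ = (n : ℝ) • (ξ + (n : ℝ)⁻¹ • x) := by
    rw [smul_add, smul_inv_smul₀ hn', add_comm]
  obtain ⟨k, rfl⟩ : ∃ k, m = k + 1 := ⟨m - 1, by omega⟩
  simp only [hx, evalR_smul_of_isHomogeneous hP, hξ0, sub_zero, Complex.real_smul,
    Nat.add_sub_cancel, pow_succ]
  push_cast
  field_simp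

lemma tendstoUniformlyOn_div_Ptilde {P : MvPolynomial (Fin d) ℂ} {m : ℕ} (hm : 1 ≤ m)
    (hP : P.IsHomogeneous m) {ξ : EuclideanSpace ℝ (Fin d)} (hξ0 : evalR P ξ = 0)
    (hS : 0 < supNormOn (Metric.closedBall 0 1) (gradCLM P ξ)) :
    TendstoUniformlyOn
      (fun (n : ℕ) x => evalR P (x + (n : ℝ) • ξ) / (Ptilde P ((n : ℝ) • ξ) 1 : ℂ))
      (fun x => (supNormOn (Metric.closedBall 0 1) (gradCLM P ξ))⁻¹ • gradCLM P ξ x) atTop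
      (Metric.closedBall 0 1) := by
  refine ((tendstoUniformlyOn_rescale hm hP hξ0).inv_supNormOn_smul
    (Metric.nonempty_closedBall.2 zero_le_one) (gradCLM P ξ).bddAbove_norm_image_closedBall
    hS).congr ?_
  filter_upwards [eventually_gt_atTop 0] with n hn x _
  dsimp only
  rw [inv_supNormOn_smul_smul _ _ (by positivity), ← Ptilde_one_eq_supNormOn, Complex.real_smul,
    Complex.ofReal_inv, div_eq_inv_mul]

lemma supNormOn_gradCLM_pos {P : MvPolynomial (Fin d) ℂ} {ξ : EuclideanSpace ℝ (Fin d)}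
    {j : Fin d} (hj : evalR (pderiv j P) ξ ≠ 0) :
    0 < supNormOn (Metric.closedBall 0 1) (gradCLM P ξ) := by
  have hx : EuclideanSpace.single j (1 : ℝ) ∈ Metric.closedBall 0 1 := by simp
  refine (norm_pos_iff.2 hj).trans_le ?_
  simpa [gradPair, apply_ite, Finset.sum_ite_eq'] using
    le_supNormOn (gradCLM P ξ).bddAbove_norm_image_closedBall hx

lemma gradNorm_pos {P : MvPolynomial (Fin d) ℂ} {ξ : EuclideanSpace ℝ (Fin d)}
    {j : Fin d} (hj : evalR (pderiv j P) ξ ≠ 0) : 0 < gradNorm P ξ :=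
  Real.sqrt_pos.2 (Finset.sum_pos' (fun _ _ => sq_nonneg _)
    ⟨j, Finset.mem_univ _, pow_pos (norm_pos_iff.2 hj) 2⟩)

end Localization

theorem statement0_general {d m : ℕ} (hm : 1 ≤ m) (P : MvPolynomial (Fin d) ℂ)
    (hP : P.IsHomogeneous m) (ξ : EuclideanSpace ℝ (Fin d))
    (hξ0 : evalR P ξ = 0) (hξ1 : (fun j => evalR (pderiv j P) ξ) ≠ 0) :
    ∃ c > (0:ℝ), ∃ n : ℕ → ℕ, StrictMono n ∧ (∀ k, 0 < n k) ∧
      Tendsto (fun k => sSup {r : ℝ | ∃ x : EuclideanSpace ℝ (Fin d), ‖x‖ ≤ 1 ∧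
          r = ‖evalR P (x + (n k : ℝ) • ξ) / (Ptilde P ((n k : ℝ) • ξ) 1 : ℂ)
              - (c : ℂ) * gradPair P ξ x / (gradNorm P ξ : ℂ)‖})
        atTop (nhds 0) := by
  obtain ⟨j, hj⟩ : ∃ j, evalR (pderiv j P) ξ ≠ 0 := Function.ne_iff.1 hξ1
  set S := supNormOn (Metric.closedBall 0 1) (gradCLM P ξ)
  have hS := supNormOn_gradCLM_pos hj
  have hgn := gradNorm_pos hj
  have hlim : ∀ x, S⁻¹ • gradCLM P ξ x
      = ((gradNorm P ξ / S : ℝ) : ℂ) * gradPair P ξ x / (gradNorm P ξ : ℂ) := fun x => by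
    have hgC : (gradNorm P ξ : ℂ) ≠ 0 := Complex.ofReal_ne_zero.2 hgn.ne'
    rw [gradCLM_apply, Complex.real_smul, Complex.ofReal_div, Complex.ofReal_inv]
    field_simp
  refine ⟨gradNorm P ξ / S, div_pos hgn hS, (· + 1), strictMono_id.add_const 1, Nat.succ_pos, ?_⟩
  have hU := ((tendstoUniformlyOn_div_Ptilde hm hP hξ0 hS).congr_right fun x _ => hlim x)
    |>.tendsto_supNormOn_sub ⟨0, Metric.mem_closedBall_self zero_le_one⟩
  simpa only [sSup_setOf_norm_le_one_eq_supNormOn, Function.comp_def] using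
    hU.comp (tendsto_add_atTop_nat 1)

/-- If `P` is homogeneous of degree `m ≥ 1`, `P(ξ) = 0` and `∇P(ξ) ≠ 0`, then
`x ↦ ⟨∇P(ξ), x⟩` is a localization of `P` at infinity along a subsequence `(n_k ξ)`. -/
theorem statement0 {d m : ℕ} (hd : 1 ≤ d) (hm : 1 ≤ m) (P : MvPolynomial (Fin d) ℂ)
    (hP : P.IsHomogeneous m) (ξ : EuclideanSpace ℝ (Fin d))
    (hξ0 : evalR P ξ = 0) (hξ1 : (fun j => evalR (pderiv j P) ξ) ≠ 0) :
    ∃ c > (0:ℝ), ∃ n : ℕ → ℕ, StrictMono n ∧ (∀ k, 0 < n k) ∧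
      Tendsto (fun k => sSup {r : ℝ | ∃ x : EuclideanSpace ℝ (Fin d), ‖x‖ ≤ 1 ∧
          r = ‖evalR P (x + (n k : ℝ) • ξ) / (Ptilde P ((n k : ℝ) • ξ) 1 : ℂ)
              - (c : ℂ) * gradPair P ξ x / (gradNorm P ξ : ℂ)‖})
        atTop (nhds 0) :=
  statement0_general hm P hP ξ hξ0 hξ1
end
end

section
/- Let d ≥ 1, let P be a nonzero polynomial in d variables with complex coefficients, and let Q be a nonzero polynomial in d variables with complex coefficients such that there is a sequence (ξ_k) in ℝ^d with |ξ_k| → ∞ and, for every t > 0, sup_{|x| ≤ t} | P(x + ξ_k)/P̃(ξ_k,1) − Q(x) | → 0 as k → ∞. Then for every linear subspace V ⊆ ℝ^d: σ_P(V) ≤ inf_{t>1} Q̃_V(0,t)/Q̃(0,t). -/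
/-!
Fix `t > 1`. Uniform convergence of `P(· + ξ_k)/P̃(ξ_k,1)` to `Q` on the ball of radius `t`
gives `P̃_W(ξ_k,t)/P̃(ξ_k,1) → Q̃_W(0,t)` for every subspace `W`, in particular for `W = V` and
`W = ℝ^d`. Dividing, the normalization cancels and `P̃_V(ξ_k,t)/P̃(ξ_k,t) → Q̃_V(0,t)/Q̃(0,t)`.
Since `ξ_k → ∞`, this limit bounds the liminf at infinity, hence `σ_P(V)`, from above.
-/

open MvPolynomial Filter Finset

noncomputable section

open Metric Topology

section

variable {d : ℕ}

theorem continuous_evalR (P : MvPolynomial (Fin d) ℂ) : Continuous (evalR P) :=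
  (continuous_eval P).comp <| continuous_pi fun i =>
    Complex.continuous_ofReal.comp ((continuous_apply i).comp (PiLp.continuous_ofLp 2 _))

theorem eq_zero_of_evalR_eventually_eq_zero {P : MvPolynomial (Fin d) ℂ}
    {ξ : EuclideanSpace ℝ (Fin d)} (h : ∀ᶠ x in 𝓝 ξ, evalR P x = 0) : P = 0 := by
  have h' : ∀ᶠ y in 𝓝 (WithLp.ofLp ξ), evalR P (WithLp.toLp 2 y) = 0 :=
    (PiLp.continuous_toLp 2 _).continuousAt.eventually h
  obtain ⟨ε, hε, hball⟩ := Metric.eventually_nhds_iff_ball.1 h'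
  refine funext_set (fun i => ((↑) : ℝ → ℂ) '' ball (ξ i) ε) (fun i => ?_) fun x hx => ?_
  · rw [Real.ball_eq_Ioo]
    exact (Set.Ioo_infinite (by linarith)).image Complex.ofReal_injective.injOn
  · choose y hy hyx using Set.mem_univ_pi.1 hx
    have hy0 := hball y (by rw [ball_pi _ hε]; exact Set.mem_univ_pi.2 hy)
    rw [← funext hyx, map_zero]
    simpa [evalR] using hy0

theorem bddAbove_setOf_norm_le {E : Type*} [NormedAddCommGroup E] [ProperSpace E] {f : E → ℝ}
    (hf : Continuous f) (t : ℝ) : BddAbove {r | ∃ x : E, ‖x‖ ≤ t ∧ r = f x} :=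
  ((isCompact_closedBall 0 t).bddAbove_image hf.continuousOn).mono <| by
    rintro _ ⟨x, hx, rfl⟩
    exact ⟨x, mem_closedBall_zero_iff.2 hx, rfl⟩

variable (P : MvPolynomial (Fin d) ℂ) (V : Submodule ℝ (EuclideanSpace ℝ (Fin d)))
  (ξ : EuclideanSpace ℝ (Fin d)) {t : ℝ}

theorem norm_evalR_add_le_PtildeV {η : EuclideanSpace ℝ (Fin d)} (hη : η ∈ V) (ht : ‖η‖ ≤ t) :
    ‖evalR P (ξ + η)‖ ≤ PtildeV P V ξ t := by
  refine le_csSup (BddAbove.mono ?_ (bddAbove_setOf_norm_le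
    (continuous_norm.comp ((continuous_evalR P).comp (continuous_const_add ξ))) t))
    ⟨η, hη, ht, rfl⟩
  rintro _ ⟨η', -, hη'⟩
  exact ⟨η', hη'⟩

theorem PtildeV_le_of_forall_le (ht : 0 ≤ t) {M : ℝ}
    (h : ∀ η ∈ V, ‖η‖ ≤ t → ‖evalR P (ξ + η)‖ ≤ M) : PtildeV P V ξ t ≤ M :=
  csSup_le ⟨_, 0, V.zero_mem, by simpa using ht, rfl⟩ fun _ ⟨η, hη, hηt, hr⟩ => hr ▸ h η hη hηt

theorem PtildeV_nonneg (ht : 0 ≤ t) : 0 ≤ PtildeV P V ξ t :=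
  (norm_nonneg _).trans (norm_evalR_add_le_PtildeV P V ξ V.zero_mem (by simpa using ht))

theorem PtildeV_le_Ptilde (ht : 0 ≤ t) : PtildeV P V ξ t ≤ Ptilde P ξ t :=
  PtildeV_le_of_forall_le P V ξ ht fun _ _ hηt => norm_evalR_add_le_PtildeV P ⊤ ξ trivial hηt

theorem PtildeV_div_Ptilde_nonneg (ht : 0 ≤ t) : 0 ≤ PtildeV P V ξ t / Ptilde P ξ t :=
  div_nonneg (PtildeV_nonneg P V ξ ht) (PtildeV_nonneg P ⊤ ξ ht)

theorem PtildeV_div_Ptilde_le_one (ht : 0 ≤ t) : PtildeV P V ξ t / Ptilde P ξ t ≤ 1 :=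
  div_le_one_of_le₀ (PtildeV_le_Ptilde P V ξ ht) (PtildeV_nonneg P ⊤ ξ ht)

theorem sigma_le_liminf [(Bornology.cobounded (EuclideanSpace ℝ (Fin d))).NeBot] (ht : 1 < t) :
    sigma P V ≤ liminf (fun ζ => PtildeV P V ζ t / Ptilde P ζ t)
      (Bornology.cobounded (EuclideanSpace ℝ (Fin d))) := by
  refine csInf_le ⟨0, ?_⟩ ⟨t, ht, rfl⟩
  rintro _ ⟨s, hs, rfl⟩
  have hs0 : 0 ≤ s := by linarith
  exact le_liminf_of_le
    (isBoundedUnder_of ⟨1, fun ζ => PtildeV_div_Ptilde_le_one P V ζ hs0⟩).isCoboundedUnder_ge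
    (.of_forall fun ζ => PtildeV_div_Ptilde_nonneg P V ζ hs0)

end

theorem Filter.liminf_le_of_tendsto_comp {α ι β : Type*} [ConditionallyCompleteLinearOrder β]
    [TopologicalSpace β] [OrderTopology β] {f : α → β} {l : Filter α} {lu : Filter ι} [NeBot lu]
    {u : ι → α} {a : β} (hu : Tendsto u lu l) (hfu : Tendsto (f ∘ u) lu (𝓝 a))
    (hf : IsBoundedUnder (· ≥ ·) l f) : liminf f l ≤ a :=
  calc liminf f l ≤ liminf f (map u lu) := liminf_le_liminf_of_le hu hf hfu.isCoboundedUnder_ge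
    _ = a := hfu.liminf_eq

section

variable {d : ℕ}

def localizationDefect (P Q : MvPolynomial (Fin d) ℂ) (ζ : EuclideanSpace ℝ (Fin d)) (t : ℝ) :
    ℝ :=
  sSup {r : ℝ | ∃ x : EuclideanSpace ℝ (Fin d), ‖x‖ ≤ t ∧
    r = ‖evalR P (x + ζ) / (Ptilde P ζ 1 : ℂ) - evalR Q x‖}

theorem abs_PtildeV_div_sub_PtildeV_le (P Q : MvPolynomial (Fin d) ℂ)
    (V : Submodule ℝ (EuclideanSpace ℝ (Fin d))) (ζ : EuclideanSpace ℝ (Fin d)) {c e t : ℝ}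
    (hc : 0 < c) (ht : 0 ≤ t)
    (h : ∀ x : EuclideanSpace ℝ (Fin d), ‖x‖ ≤ t → ‖evalR P (x + ζ) / (c : ℂ) - evalR Q x‖ ≤ e) :
    |PtildeV P V ζ t / c - PtildeV Q V 0 t| ≤ e := by
  have hpt : ∀ η : EuclideanSpace ℝ (Fin d), ‖η‖ ≤ t →
      |‖evalR P (ζ + η)‖ / c - ‖evalR Q (0 + η)‖| ≤ e := fun η hηt =>
    calc |‖evalR P (ζ + η)‖ / c - ‖evalR Q (0 + η)‖|
        = |‖evalR P (η + ζ) / (c : ℂ)‖ - ‖evalR Q η‖| := by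
          rw [norm_div, Complex.norm_real, Real.norm_of_nonneg hc.le, add_comm, zero_add]
      _ ≤ ‖evalR P (η + ζ) / (c : ℂ) - evalR Q η‖ := abs_norm_sub_norm_le _ _
      _ ≤ e := h η hηt
  rw [abs_le, neg_le_sub_iff_le_add, sub_le_iff_le_add, div_le_iff₀ hc]
  constructor
  · refine PtildeV_le_of_forall_le Q V 0 ht fun η hη hηt => ?_
    have h1 := (abs_le.1 (hpt η hηt)).1
    have h2 := div_le_div_of_nonneg_right (norm_evalR_add_le_PtildeV P V ζ hη hηt) hc.le
    linarith
  · refine PtildeV_le_of_forall_le P V ζ ht fun η hη hηt => ?_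
    have h1 := (abs_le.1 (hpt η hηt)).2
    have h2 := norm_evalR_add_le_PtildeV Q V 0 hη hηt
    rw [sub_le_iff_le_add, div_le_iff₀ hc] at h1
    exact h1.trans (mul_le_mul_of_nonneg_right (by linarith) hc.le)

variable {P Q : MvPolynomial (Fin d) ℂ} {ξ : ℕ → EuclideanSpace ℝ (Fin d)} {t : ℝ}

theorem Ptilde_pos (hP : P ≠ 0) (ζ : EuclideanSpace ℝ (Fin d)) (ht : 0 < t) : 0 < Ptilde P ζ t := by
  by_contra! hle
  refine hP (eq_zero_of_evalR_eventually_eq_zero (ξ := ζ) ?_)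
  filter_upwards [closedBall_mem_nhds ζ ht] with x hx
  have := norm_evalR_add_le_PtildeV P ⊤ ζ trivial (mem_closedBall_iff_norm.1 hx)
  rw [add_sub_cancel] at this
  exact norm_le_zero_iff.1 (this.trans hle)

theorem tendsto_PtildeV_div_Ptilde_one (hP : P ≠ 0) (V : Submodule ℝ (EuclideanSpace ℝ (Fin d)))
    (ht : 0 < t) (hconv : Tendsto (fun k => localizationDefect P Q (ξ k) t) atTop (𝓝 0)) :
    Tendsto (fun k => PtildeV P V (ξ k) t / Ptilde P (ξ k) 1) atTop (𝓝 (PtildeV Q V 0 t)) := by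
  have hP' := continuous_evalR P
  have hQ' := continuous_evalR Q
  have hbound (k : ℕ) : ‖PtildeV P V (ξ k) t / Ptilde P (ξ k) 1 - PtildeV Q V 0 t‖ ≤
      localizationDefect P Q (ξ k) t :=
    abs_PtildeV_div_sub_PtildeV_le P Q V (ξ k) (Ptilde_pos hP (ξ k) one_pos) ht.le fun x hx =>
      le_csSup (bddAbove_setOf_norm_le (by fun_prop) t) ⟨x, hx, rfl⟩
  exact tendsto_iff_norm_sub_tendsto_zero.2 (squeeze_zero (fun _ => norm_nonneg _) hbound hconv)

theorem tendsto_PtildeV_div_Ptilde (hP : P ≠ 0) (hQ : Q ≠ 0)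
    (V : Submodule ℝ (EuclideanSpace ℝ (Fin d))) (ht : 0 < t)
    (hconv : Tendsto (fun k => localizationDefect P Q (ξ k) t) atTop (𝓝 0)) :
    Tendsto (fun k => PtildeV P V (ξ k) t / Ptilde P (ξ k) t) atTop
      (𝓝 (PtildeV Q V 0 t / Ptilde Q 0 t)) :=
  ((tendsto_PtildeV_div_Ptilde_one hP V ht hconv).div (tendsto_PtildeV_div_Ptilde_one hP ⊤ ht hconv)
    (Ptilde_pos hQ 0 ht).ne').congr fun k =>
      div_div_div_cancel_right₀ (Ptilde_pos hP (ξ k) one_pos).ne' _ _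

end

theorem statement6_general {d : ℕ} (P Q : MvPolynomial (Fin d) ℂ)
    (hP : P ≠ 0) (hQ : Q ≠ 0) (ξ : ℕ → EuclideanSpace ℝ (Fin d))
    (hξ : Tendsto (fun k => ‖ξ k‖) atTop atTop)
    (hconv : ∀ t > (0:ℝ), Tendsto (fun k => sSup {r : ℝ |
        ∃ x : EuclideanSpace ℝ (Fin d), ‖x‖ ≤ t ∧
          r = ‖evalR P (x + ξ k) / (Ptilde P (ξ k) 1 : ℂ) - evalR Q x‖})
      atTop (nhds 0))
    (V : Submodule ℝ (EuclideanSpace ℝ (Fin d))) :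
    sigma P V ≤ sInf {r : ℝ | ∃ t > (1:ℝ), r = PtildeV Q V 0 t / Ptilde Q 0 t} := by
  have hξ' : Tendsto ξ atTop (Bornology.cobounded (EuclideanSpace ℝ (Fin d))) :=
    tendsto_norm_atTop_iff_cobounded.1 hξ
  have := hξ'.neBot
  refine le_csInf ⟨_, 2, one_lt_two, rfl⟩ ?_
  rintro _ ⟨t, ht, rfl⟩
  have ht0 : 0 < t := one_pos.trans ht
  calc sigma P V ≤ liminf (fun ζ => PtildeV P V ζ t / Ptilde P ζ t) _ := sigma_le_liminf P V ht
    _ ≤ PtildeV Q V 0 t / Ptilde Q 0 t :=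
      liminf_le_of_tendsto_comp hξ'
        (tendsto_PtildeV_div_Ptilde hP hQ V ht0 (hconv t ht0))
        (isBoundedUnder_of ⟨0, fun ζ => PtildeV_div_Ptilde_nonneg P V ζ ht0.le⟩)

/-- If `Q` is a localization of `P` at infinity (along a sequence `ξ_k` with `|ξ_k| → ∞`,
with uniform convergence of `P(·+ξ_k)/P̃(ξ_k,1)` to `Q` on every ball), then
`σ_P(V) ≤ inf_{t>1} Q̃_V(0,t)/Q̃(0,t)` for every subspace `V`. -/
theorem statement6 {d : ℕ} (hd : 1 ≤ d) (P Q : MvPolynomial (Fin d) ℂ)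
    (hP : P ≠ 0) (hQ : Q ≠ 0) (ξ : ℕ → EuclideanSpace ℝ (Fin d))
    (hξ : Tendsto (fun k => ‖ξ k‖) atTop atTop)
    (hconv : ∀ t > (0:ℝ), Tendsto (fun k => sSup {r : ℝ |
        ∃ x : EuclideanSpace ℝ (Fin d), ‖x‖ ≤ t ∧
          r = ‖evalR P (x + ξ k) / (Ptilde P (ξ k) 1 : ℂ) - evalR Q x‖})
      atTop (nhds 0))
    (V : Submodule ℝ (EuclideanSpace ℝ (Fin d))) :
    sigma P V ≤ sInf {r : ℝ | ∃ t > (1:ℝ), r = PtildeV Q V 0 t / Ptilde Q 0 t} :=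
  statement6_general P Q hP hQ ξ hξ hconv V
end
end

section
/- Let d ≥ 3, let Q be the polynomial in d real variables Q(ξ) = ξ_1² − ξ_2² − ⋯ − ξ_d², and let e_d := (0,…,0,1) ∈ ℝ^d. Then σ_Q(e_d) = 0. -/
open MvPolynomial Filter Finset

noncomputable section

/-- Evaluation of a real-coefficient polynomial at a point of `ℝ^d`. -/
def evalRR {d : ℕ} (Q : MvPolynomial (Fin d) ℝ) (ξ : EuclideanSpace ℝ (Fin d)) : ℝ :=
  eval (fun i => ξ i) Q

/-- `Q̃_V(ξ,t) = sup {|Q(ξ+η)| : η ∈ V, |η| ≤ t}`. -/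
def PtildeVR {d : ℕ} (Q : MvPolynomial (Fin d) ℝ) (V : Submodule ℝ (EuclideanSpace ℝ (Fin d)))
    (ξ : EuclideanSpace ℝ (Fin d)) (t : ℝ) : ℝ :=
  sSup {r : ℝ | ∃ η ∈ V, ‖η‖ ≤ t ∧ r = |evalRR Q (ξ + η)|}

/-- `Q̃(ξ,t) = Q̃_{ℝ^d}(ξ,t)`. -/
def PtildeR {d : ℕ} (Q : MvPolynomial (Fin d) ℝ) (ξ : EuclideanSpace ℝ (Fin d)) (t : ℝ) : ℝ :=
  PtildeVR Q ⊤ ξ t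

/-- `σ⁰_Q(V)`. -/
def sigma0R {d : ℕ} (Q : MvPolynomial (Fin d) ℝ) (V : Submodule ℝ (EuclideanSpace ℝ (Fin d))) : ℝ :=
  sInf {r : ℝ | ∃ t > (1:ℝ), ∃ ξ, r = PtildeVR Q V ξ t / PtildeR Q ξ t}

/-- `σ_Q(V)`. -/
def sigmaR {d : ℕ} (Q : MvPolynomial (Fin d) ℝ) (V : Submodule ℝ (EuclideanSpace ℝ (Fin d))) : ℝ :=
  sInf {r : ℝ | ∃ t > (1:ℝ), r = liminf (fun ξ => PtildeVR Q V ξ t / PtildeR Q ξ t)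
    (Bornology.cobounded (EuclideanSpace ℝ (Fin d)))}

/-!
On the null ray `ξ_R = R e₁ + R e₂` of the Lorentz form `Q` we have `Q(ξ_R) = 0`, and `ξ_R` is
orthogonal to `e_d`, so `Q(ξ_R + s e_d) = -s²`: along `e_d` the polynomial stays bounded by `t²`.
Moving along `e₁` instead gives `Q(ξ_R + t e₁) = 2tR + t²`. Hence the ratio
`Q̃_V(ξ_R, t) / Q̃(ξ_R, t)` is at most `t / (2R)`, which tends to `0` as `ξ_R` leaves every
bounded set.
-/

open Bornology Topology

section Ptilde

variable {d : ℕ} (Q : MvPolynomial (Fin d) ℝ)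

theorem continuous_evalRR : Continuous (evalRR Q) :=
  (continuous_eval Q).comp (continuous_pi fun i => by fun_prop)

theorem bddAbove_abs_evalRR (V : Submodule ℝ (EuclideanSpace ℝ (Fin d)))
    (ξ : EuclideanSpace ℝ (Fin d)) (t : ℝ) :
    BddAbove {r : ℝ | ∃ η ∈ V, ‖η‖ ≤ t ∧ r = |evalRR Q (ξ + η)|} := by
  have hcont : Continuous fun η => |evalRR Q (ξ + η)| :=
    ((continuous_evalRR Q).comp (continuous_const_add ξ)).abs
  refine ((isCompact_closedBall 0 t).image hcont).bddAbove.mono ?_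
  rintro _ ⟨η, -, hη, rfl⟩
  exact ⟨η, mem_closedBall_zero_iff.2 hη, rfl⟩

variable {Q} {V W : Submodule ℝ (EuclideanSpace ℝ (Fin d))} {ξ η : EuclideanSpace ℝ (Fin d)}
  {t : ℝ}

theorem abs_evalRR_le_PtildeVR (hη : η ∈ V) (ht : ‖η‖ ≤ t) :
    |evalRR Q (ξ + η)| ≤ PtildeVR Q V ξ t :=
  le_csSup (bddAbove_abs_evalRR Q V ξ t) ⟨η, hη, ht, rfl⟩

theorem PtildeVR_le {M : ℝ} (hM : 0 ≤ M)
    (h : ∀ η ∈ V, ‖η‖ ≤ t → |evalRR Q (ξ + η)| ≤ M) : PtildeVR Q V ξ t ≤ M :=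
  Real.sSup_le (by rintro _ ⟨η, hη, ht, rfl⟩; exact h η hη ht) hM

theorem PtildeVR_nonneg : 0 ≤ PtildeVR Q V ξ t :=
  Real.sSup_nonneg (by rintro _ ⟨η, -, -, rfl⟩; exact abs_nonneg _)

theorem PtildeVR_mono (hVW : V ≤ W) (ht : 0 ≤ t) : PtildeVR Q V ξ t ≤ PtildeVR Q W ξ t :=
  csSup_le_csSup (bddAbove_abs_evalRR Q W ξ t) ⟨_, 0, V.zero_mem, by simpa using ht, rfl⟩
    (by rintro _ ⟨η, hη, ht, rfl⟩; exact ⟨η, hVW hη, ht, rfl⟩)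

variable (Q V) in
def ptildeRatio (t : ℝ) (ξ : EuclideanSpace ℝ (Fin d)) : ℝ :=
  PtildeVR Q V ξ t / PtildeR Q ξ t

theorem ptildeRatio_nonneg : 0 ≤ ptildeRatio Q V t ξ :=
  div_nonneg PtildeVR_nonneg PtildeVR_nonneg

theorem ptildeRatio_le_one (ht : 0 ≤ t) : ptildeRatio Q V t ξ ≤ 1 :=
  div_le_one_of_le₀ (PtildeVR_mono le_top ht) PtildeVR_nonneg

theorem sigmaR_eq_zero_of_tendsto {ι : Type*} {l : Filter ι} [l.NeBot] (ht : 1 < t)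
    {γ : ι → EuclideanSpace ℝ (Fin d)} (hγ : Tendsto γ l (cobounded _))
    (hratio : Tendsto (ptildeRatio Q V t ∘ γ) l (𝓝 0)) : sigmaR Q V = 0 := by
  have := hγ.neBot
  set S : Set ℝ := {r | ∃ s > (1 : ℝ), r = liminf (ptildeRatio Q V s) (cobounded _)}
  have liminf_nonneg (s : ℝ) (hs : 1 < s) : 0 ≤ liminf (ptildeRatio Q V s) (cobounded _) :=
    le_liminf_of_le (isCoboundedUnder_ge_of_le _ fun _ => ptildeRatio_le_one (by linarith))
      (Eventually.of_forall fun _ => ptildeRatio_nonneg)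
  have liminf_nonpos : liminf (ptildeRatio Q V t) (cobounded _) ≤ 0 :=
    calc _ ≤ liminf (ptildeRatio Q V t ∘ γ) l :=
          hγ.liminf_le_liminf_comp
            (isCoboundedUnder_ge_of_le _ fun _ => ptildeRatio_le_one (by linarith))
            (isBoundedUnder_of ⟨0, fun _ => ptildeRatio_nonneg⟩)
      _ = 0 := hratio.liminf_eq
  have zero_mem : (0 : ℝ) ∈ S := ⟨t, ht, (le_antisymm liminf_nonpos (liminf_nonneg t ht)).symm⟩
  have zero_mem_lowerBounds : (0 : ℝ) ∈ lowerBounds S := by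
    rintro _ ⟨s, hs, rfl⟩
    exact liminf_nonneg s hs
  exact IsLeast.csInf_eq ⟨zero_mem, zero_mem_lowerBounds⟩

end Ptilde

section Minkowski

variable {d : ℕ} (i₀ : Fin d)

def minkowski (ξ : EuclideanSpace ℝ (Fin d)) : ℝ :=
  ξ i₀ ^ 2 - ∑ j ∈ univ.erase i₀, ξ j ^ 2

theorem minkowski_zero : minkowski i₀ 0 = 0 := by
  simp [minkowski]

theorem minkowski_add_single_self (ξ : EuclideanSpace ℝ (Fin d)) (s : ℝ) :
    minkowski i₀ (ξ + EuclideanSpace.single i₀ s) = minkowski i₀ ξ + 2 * s * ξ i₀ + s ^ 2 := by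
  have hsum : ∀ j ∈ univ.erase i₀, (ξ + EuclideanSpace.single i₀ s) j ^ 2 = ξ j ^ 2 := by
    intro j hj
    simp [ne_of_mem_erase hj]
  rw [minkowski, minkowski, sum_congr rfl hsum]
  simp
  ring

theorem minkowski_add_single_of_ne {k : Fin d} (hk : k ≠ i₀) (ξ : EuclideanSpace ℝ (Fin d))
    (s : ℝ) :
    minkowski i₀ (ξ + EuclideanSpace.single k s) = minkowski i₀ ξ - 2 * s * ξ k - s ^ 2 := by
  have hsum : ∀ j ∈ univ.erase i₀, (ξ + EuclideanSpace.single k s) j ^ 2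
      = ξ j ^ 2 + if k = j then 2 * s * ξ k + s ^ 2 else 0 := by
    intro j _
    by_cases hj : k = j
    · subst hj; simp; ring
    · simp [hj, Ne.symm hj]
  rw [minkowski, minkowski, sum_congr rfl hsum, sum_add_distrib, sum_ite_eq,
    if_pos (mem_erase.2 ⟨hk, mem_univ k⟩)]
  simp [hk.symm]
  ring

end Minkowski

section NullRay

variable {d : ℕ} {i₀ i₁ k : Fin d}

def nullRay (i₀ i₁ : Fin d) (R : ℝ) : EuclideanSpace ℝ (Fin d) :=
  EuclideanSpace.single i₁ R + EuclideanSpace.single i₀ R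

theorem minkowski_nullRay (h₁₀ : i₁ ≠ i₀) (R : ℝ) : minkowski i₀ (nullRay i₀ i₁ R) = 0 := by
  have hR := minkowski_add_single_of_ne i₀ h₁₀ 0 R
  rw [zero_add, minkowski_zero] at hR
  rw [nullRay, minkowski_add_single_self, hR]
  simp [h₁₀.symm]

theorem nullRay_apply_of_ne (hk₀ : k ≠ i₀) (hk₁ : k ≠ i₁) (R : ℝ) : nullRay i₀ i₁ R k = 0 := by
  simp [nullRay, hk₀, hk₁]

theorem tendsto_nullRay_cobounded (h₁₀ : i₁ ≠ i₀) :
    Tendsto (nullRay i₀ i₁) atTop (cobounded (EuclideanSpace ℝ (Fin d))) := by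
  refine tendsto_norm_atTop_iff_cobounded.1 (tendsto_atTop_mono (fun R => ?_) tendsto_id)
  calc R ≤ ‖nullRay i₀ i₁ R i₀‖ := by simp [nullRay, h₁₀.symm, le_abs_self]
    _ ≤ ‖nullRay i₀ i₁ R‖ := PiLp.norm_apply_le _ _

variable {Q : MvPolynomial (Fin d) ℝ}

theorem PtildeVR_nullRay_le (hQ : evalRR Q = minkowski i₀) (h₁₀ : i₁ ≠ i₀) (hk₀ : k ≠ i₀)
    (hk₁ : k ≠ i₁) (R : ℝ) {t : ℝ} :
    PtildeVR Q (Submodule.span ℝ {EuclideanSpace.single k 1}) (nullRay i₀ i₁ R) t ≤ t ^ 2 := by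
  refine PtildeVR_le (sq_nonneg t) fun η hη hηt => ?_
  obtain ⟨s, rfl⟩ := Submodule.mem_span_singleton.1 hη
  have hsingle : s • EuclideanSpace.single k (1 : ℝ) = EuclideanSpace.single k s := by
    ext j
    simp [PiLp.single_apply]
  have hst : |s| ≤ t := by simpa [hsingle] using hηt
  rw [hsingle, hQ, minkowski_add_single_of_ne i₀ hk₀,
    minkowski_nullRay h₁₀, nullRay_apply_of_ne hk₀ hk₁]
  simpa using sq_le_sq' (neg_le_of_abs_le hst) (le_of_abs_le hst)

theorem le_PtildeR_nullRay (hQ : evalRR Q = minkowski i₀) (h₁₀ : i₁ ≠ i₀) (R : ℝ) {t : ℝ}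
    (ht : 0 ≤ t) : 2 * t * R + t ^ 2 ≤ PtildeR Q (nullRay i₀ i₁ R) t := by
  have hval : evalRR Q (nullRay i₀ i₁ R + EuclideanSpace.single i₀ t) = 2 * t * R + t ^ 2 := by
    rw [hQ, minkowski_add_single_self, minkowski_nullRay h₁₀]
    simp [nullRay, h₁₀.symm]
  calc 2 * t * R + t ^ 2 ≤ |evalRR Q (nullRay i₀ i₁ R + EuclideanSpace.single i₀ t)| :=
        hval ▸ le_abs_self _
    _ ≤ PtildeR Q (nullRay i₀ i₁ R) t :=
        abs_evalRR_le_PtildeVR Submodule.mem_top (by simp [abs_of_nonneg ht])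

theorem ptildeRatio_nullRay_le (hQ : evalRR Q = minkowski i₀) (h₁₀ : i₁ ≠ i₀) (hk₀ : k ≠ i₀)
    (hk₁ : k ≠ i₁) {R t : ℝ} (hR : 0 < R) (ht : 0 < t) :
    ptildeRatio Q (Submodule.span ℝ {EuclideanSpace.single k 1}) t (nullRay i₀ i₁ R)
      ≤ t / (2 * R) := by
  have hnum := PtildeVR_nullRay_le hQ h₁₀ hk₀ hk₁ R (t := t)
  have hden := le_PtildeR_nullRay hQ h₁₀ R ht.le
  rw [ptildeRatio, div_le_div_iff₀ (lt_of_lt_of_le (by positivity) hden) (by positivity)]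
  nlinarith [PtildeVR_nonneg (Q := Q) (V := Submodule.span ℝ {EuclideanSpace.single k 1})
    (ξ := nullRay i₀ i₁ R) (t := t)]

theorem tendsto_ptildeRatio_nullRay (hQ : evalRR Q = minkowski i₀) (h₁₀ : i₁ ≠ i₀)
    (hk₀ : k ≠ i₀) (hk₁ : k ≠ i₁) {t : ℝ} (ht : 0 < t) :
    Tendsto (ptildeRatio Q (Submodule.span ℝ {EuclideanSpace.single k 1}) t ∘ nullRay i₀ i₁)
      atTop (𝓝 0) := by
  have hbound : Tendsto (fun R : ℝ => t / (2 * R)) atTop (𝓝 0) :=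
    tendsto_const_nhds.div_atTop (tendsto_id.const_mul_atTop two_pos)
  refine tendsto_of_tendsto_of_tendsto_of_le_of_le' tendsto_const_nhds hbound
    (Eventually.of_forall fun _ => ptildeRatio_nonneg) ?_
  filter_upwards [eventually_gt_atTop 0] with R hR
  exact ptildeRatio_nullRay_le hQ h₁₀ hk₀ hk₁ hR ht

end NullRay

/-- For `Q(ξ) = ξ₁² - ξ₂² - ⋯ - ξ_d²` (`d ≥ 3`) and `e_d = (0,…,0,1)`: `σ_Q(e_d) = 0`. -/
theorem statement9 {d : ℕ} (hd : 3 ≤ d) (Q : MvPolynomial (Fin d) ℝ)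
    (hQ : Q = X (⟨0, by omega⟩ : Fin d) ^ 2 -
        ∑ j ∈ Finset.univ.erase (⟨0, by omega⟩ : Fin d), X j ^ 2)
    (ed : EuclideanSpace ℝ (Fin d))
    (hed : ∀ i : Fin d, ed i = if (i : ℕ) = d - 1 then 1 else 0) :
    sigmaR Q (Submodule.span ℝ {ed}) = 0 := by
  set i₀ : Fin d := ⟨0, by omega⟩
  set i₁ : Fin d := ⟨1, by omega⟩
  set k : Fin d := ⟨d - 1, by omega⟩
  have h₁₀ : i₁ ≠ i₀ := by simp [i₀, i₁, Fin.ext_iff]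
  have hk₀ : k ≠ i₀ := by simp [i₀, k, Fin.ext_iff]; omega
  have hk₁ : k ≠ i₁ := by simp [i₁, k, Fin.ext_iff]; omega
  have hQ' : evalRR Q = minkowski i₀ := by
    funext ξ
    simp [evalRR, hQ, minkowski]
  have hed' : ed = EuclideanSpace.single k 1 := by
    ext i
    simp [hed, PiLp.single_apply, k, Fin.ext_iff]
  rw [hed']
  exact sigmaR_eq_zero_of_tendsto one_lt_two (tendsto_nullRay_cobounded h₁₀)
    (tendsto_ptildeRatio_nullRay hQ' h₁₀ hk₀ hk₁ two_pos)
end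
end
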